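/- arXiv:1910.02758 — 5 statements merged into one kernel-verified Lean document; each statement's English description precedes it below -/
import Mathlib

section
/- Suppose CTM r > 0 for every base block r. If the coarse conditional BDM of X given Y is zero, BDM(X|Y) = 0, then every base block occurring in X also occurs in Y (supp n_X ⊆ supp n_Y), and moreover every base block r of X with multiplicity n_X r ≥ 2 satisfies n_X r = n_Y r. -/
open Finsupp

/-- The multiplicity correction term: `f n m = 0` if `n = m`, else `log n`. -/
noncomputable def bdmF (n m : ℕ) : ℝ := if n = m then 0 else Real.log n

/-- The (unconditional) BDM of a decomposed object given by its multiplicity function. -/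
noncomputable def BDM {R : Type*} (CTM : R → ℝ) (X : R →₀ ℕ) : ℝ :=
  ∑ r ∈ X.support, (CTM r + Real.log (X r))

/-- The coarse conditional BDM of `X` given `Y`. -/
noncomputable def condBDM {R : Type*} [DecidableEq R] (CTM : R → ℝ) (X Y : R →₀ ℕ) : ℝ :=
  ∑ r ∈ X.support \ Y.support, (CTM r + Real.log (X r)) +
  ∑ r ∈ X.support ∩ Y.support, bdmF (X r) (Y r)

/-! Both sums in `condBDM` have nonnegative terms, so it vanishes exactly when every term does.
A block of `X` missing from `Y` costs at least `CTM r > 0`, hence none is missing; a shared block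
costs `log (X r)` when the multiplicities differ, which vanishes only for `X r = 1`. -/

theorem bdmF_nonneg (n m : ℕ) : 0 ≤ bdmF n m := by
  unfold bdmF
  split_ifs
  exacts [le_rfl, Real.log_natCast_nonneg n]

theorem Real.log_natCast_eq_zero_iff (n : ℕ) : Real.log n = 0 ↔ n ≤ 1 := by
  rw [← not_lt, ← Nat.one_lt_cast (α := ℝ), ← Real.log_pos_iff n.cast_nonneg,
    (Real.log_natCast_nonneg n).lt_iff_ne', not_not]

theorem bdmF_eq_zero_iff {n m : ℕ} : bdmF n m = 0 ↔ n = m ∨ n ≤ 1 := by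
  unfold bdmF
  split_ifs with h
  · simp [h]
  · rw [Real.log_natCast_eq_zero_iff]
    simp [h]

theorem condBDM_eq_zero_iff {R : Type*} [DecidableEq R] {CTM : R → ℝ} (hCTM : ∀ r, 0 < CTM r)
    (X Y : R →₀ ℕ) :
    condBDM CTM X Y = 0 ↔ X.support ⊆ Y.support ∧ ∀ r ∈ X.support, bdmF (X r) (Y r) = 0 := by
  have hmissing_pos : ∀ r, 0 < CTM r + Real.log (X r) := fun r =>
    add_pos_of_pos_of_nonneg (hCTM r) (Real.log_natCast_nonneg _)
  unfold condBDM
  rw [add_eq_zero_iff_of_nonneg (Finset.sum_nonneg fun r _ => (hmissing_pos r).le)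
      (Finset.sum_nonneg fun r _ => bdmF_nonneg _ _),
    Finset.sum_eq_zero_iff_of_nonneg fun r _ => (hmissing_pos r).le,
    Finset.sum_eq_zero_iff_of_nonneg fun r _ => bdmF_nonneg _ _]
  have hmissing_empty :
      (∀ r ∈ X.support \ Y.support, CTM r + Real.log (X r) = 0) ↔ X.support ⊆ Y.support := by
    rw [← Finset.sdiff_eq_empty_iff_subset, Finset.eq_empty_iff_forall_notMem]
    exact forall₂_congr fun r _ => iff_false_intro (hmissing_pos r).ne'
  rw [hmissing_empty]
  exact and_congr_right fun hsub => by rw [Finset.inter_eq_left.mpr hsub]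

/-- Suppose `CTM r > 0` for every base block. If `BDM(X|Y) = 0`, then every base block of `X`
occurs in `Y`, and every base block of `X` with multiplicity at least 2 has the same
multiplicity in `Y`. -/
theorem condBDM_eq_zero_imp {R : Type*} [DecidableEq R] (CTM : R → ℝ)
    (hCTM : ∀ r, 0 < CTM r) (X Y : R →₀ ℕ) (h : condBDM CTM X Y = 0) :
    X.support ⊆ Y.support ∧ ∀ r ∈ X.support, 2 ≤ X r → X r = Y r := by
  obtain ⟨hsub, hshared⟩ := (condBDM_eq_zero_iff hCTM X Y).mp h
  exact ⟨hsub, fun r hr hge => (bdmF_eq_zero_iff.mp (hshared r hr)).resolve_right (by omega)⟩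
end

section
/- Mutual BDM is symmetric: for any two decomposed objects X and Y, MutualBDM(X,Y) = MutualBDM(Y,X), i.e. BDM(X) − BDM(X|Y) = BDM(Y) − BDM(Y|X). -/
open Finsupp

/-- Mutual BDM is symmetric: `BDM(X) − BDM(X|Y) = BDM(Y) − BDM(Y|X)`. -/
theorem mutualBDM_symm {R : Type*} [DecidableEq R] (CTM : R → ℝ) (X Y : R →₀ ℕ) :
    BDM CTM X - condBDM CTM X Y = BDM CTM Y - condBDM CTM Y X := by
  have hX : BDM CTM X = ∑ r ∈ X.support ∩ Y.support, (CTM r + Real.log (X r)) +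
      ∑ r ∈ X.support \ Y.support, (CTM r + Real.log (X r)) :=
    (Finset.sum_inter_add_sum_sdiff _ _ _).symm
  have hY : BDM CTM Y = ∑ r ∈ Y.support ∩ X.support, (CTM r + Real.log (Y r)) +
      ∑ r ∈ Y.support \ X.support, (CTM r + Real.log (Y r)) :=
    (Finset.sum_inter_add_sum_sdiff _ _ _).symm
  rw [hX, hY]
  unfold condBDM
  rw [Finset.inter_comm Y.support X.support]
  ring_nf
  rw [← Finset.sum_sub_distrib, ← Finset.sum_sub_distrib]
  apply Finset.sum_congr rfl
  intro r hr
  simp only [Finset.mem_inter, mem_support_iff] at hr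
  unfold bdmF
  by_cases h : X r = Y r
  · simp [h]
  · rw [if_neg h, if_neg (Ne.symm h)]
    ring
end

section
/- For any two decomposed objects X and Y, the mutual BDM satisfies the inclusion–exclusion identity MutualBDM(X,Y) = BDM(X) + BDM(Y) − JointBDM(X,Y). -/
open Finsupp

/-- The mutual BDM of `X` and `Y`: `MutualBDM(X,Y) = BDM(X) − BDM(X|Y)`. -/
noncomputable def mutualBDM {R : Type*} [DecidableEq R] (CTM : R → ℝ) (X Y : R →₀ ℕ) : ℝ :=
  BDM CTM X - condBDM CTM X Y

/-- The joint BDM of `X` and `Y`: `JointBDM(X,Y) = BDM(Y|X) + BDM(X)`. -/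
noncomputable def jointBDM {R : Type*} [DecidableEq R] (CTM : R → ℝ) (X Y : R →₀ ℕ) : ℝ :=
  condBDM CTM Y X + BDM CTM X

/- Only blocks common to `X` and `Y` contribute: there `X` and `Y` carry the same cost
`CTM r + log (X r) - f (X r) (Y r)`, which is `CTM r + log (X r)` when the multiplicities agree and
`CTM r` otherwise. So mutual BDM is symmetric, and the identity is this symmetry rearranged. -/

namespace BDM

variable {R : Type*} [DecidableEq R] (CTM : R → ℝ) (X Y : R →₀ ℕ)

theorem eq_sum_sdiff_add_sum_inter :
    BDM CTM X = ∑ r ∈ X.support \ Y.support, (CTM r + Real.log (X r)) +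
      ∑ r ∈ X.support ∩ Y.support, (CTM r + Real.log (X r)) := by
  rw [BDM, ← Finset.sum_union (Finset.disjoint_sdiff_inter _ _), Finset.sdiff_union_inter]

end BDM

theorem log_sub_bdmF_comm (n m : ℕ) : Real.log n - bdmF n m = Real.log m - bdmF m n := by
  unfold bdmF
  by_cases h : n = m
  · simp [h]
  · simp [h, Ne.symm h]

section mutualBDM

variable {R : Type*} [DecidableEq R] (CTM : R → ℝ) (X Y : R →₀ ℕ)

theorem mutualBDM_eq_sum_inter :
    mutualBDM CTM X Y =
      ∑ r ∈ X.support ∩ Y.support, (CTM r + (Real.log (X r) - bdmF (X r) (Y r))) := by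
  rw [mutualBDM, condBDM, BDM.eq_sum_sdiff_add_sum_inter CTM X Y, add_sub_add_left_eq_sub,
    ← Finset.sum_sub_distrib]
  simp only [add_sub_assoc]

theorem mutualBDM_comm : mutualBDM CTM X Y = mutualBDM CTM Y X := by
  rw [mutualBDM_eq_sum_inter, mutualBDM_eq_sum_inter, Finset.inter_comm]
  exact Finset.sum_congr rfl fun r _ => by rw [log_sub_bdmF_comm]

end mutualBDM

/-- Inclusion–exclusion: `MutualBDM(X,Y) = BDM(X) + BDM(Y) − JointBDM(X,Y)`. -/
theorem mutualBDM_eq_add_sub_joint {R : Type*} [DecidableEq R] (CTM : R → ℝ)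
    (X Y : R →₀ ℕ) :
    mutualBDM CTM X Y = BDM CTM X + BDM CTM Y - jointBDM CTM X Y := by
  rw [mutualBDM_comm, mutualBDM, jointBDM]
  ring
end

section
/- Joint BDM is symmetric: for any two decomposed objects X and Y, JointBDM(X,Y) = JointBDM(Y,X), i.e. BDM(Y|X) + BDM(X) = BDM(X|Y) + BDM(Y). -/
open Finsupp

/- Split both sides over the blocks occurring in `X` only, in `Y` only, and in both. A block
occurring in only one object contributes its full `CTM r + log n` to either side. On a common
block the sides contribute `CTM r` plus `f(n_Y, n_X) + log n_X`, resp. `f(n_X, n_Y) + log n_Y`;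
both equal `log n_X` when `n_X = n_Y`, and `log n_X + log n_Y` otherwise. -/

theorem bdmF_add_log_comm (n m : ℕ) : bdmF m n + Real.log n = bdmF n m + Real.log m := by
  unfold bdmF
  by_cases h : n = m
  · simp [h]
  · rw [if_neg (Ne.symm h), if_neg h, add_comm]

theorem BDM_eq_sum_sdiff_add_sum_inter {R : Type*} [DecidableEq R] (CTM : R → ℝ)
    (X Y : R →₀ ℕ) :
    BDM CTM X = ∑ r ∈ X.support \ Y.support, (CTM r + Real.log (X r)) +
      ∑ r ∈ X.support ∩ Y.support, (CTM r + Real.log (X r)) := by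
  rw [BDM, ← Finset.sum_union (Finset.disjoint_sdiff_inter _ _), Finset.sdiff_union_inter]

theorem condBDM_add_BDM {R : Type*} [DecidableEq R] (CTM : R → ℝ) (X Y : R →₀ ℕ) :
    condBDM CTM Y X + BDM CTM X =
      (∑ r ∈ Y.support \ X.support, (CTM r + Real.log (Y r)) +
        ∑ r ∈ X.support \ Y.support, (CTM r + Real.log (X r))) +
      ∑ r ∈ X.support ∩ Y.support, (CTM r + (bdmF (Y r) (X r) + Real.log (X r))) := by
  rw [condBDM, BDM_eq_sum_sdiff_add_sum_inter CTM X Y, Finset.inter_comm,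
    add_add_add_comm, ← Finset.sum_add_distrib]
  congr 1
  refine Finset.sum_congr rfl fun r _ => ?_
  ring

/-- Joint BDM is symmetric: `BDM(Y|X) + BDM(X) = BDM(X|Y) + BDM(Y)`. -/
theorem jointBDM_symm {R : Type*} [DecidableEq R] (CTM : R → ℝ) (X Y : R →₀ ℕ) :
    condBDM CTM Y X + BDM CTM X = condBDM CTM X Y + BDM CTM Y := by
  rw [condBDM_add_BDM, condBDM_add_BDM, add_comm (∑ r ∈ X.support \ Y.support, _),
    Finset.inter_comm Y.support]
  congr 1
  refine Finset.sum_congr rfl fun r _ => ?_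
  rw [bdmF_add_log_comm]
end

section
/- Under the same partition strategy, strong conditional BDM never exceeds coarse conditional BDM: if the conditional estimate CCTM satisfies CCTM(r,r) = 0 for every base block r and CCTM(r,s) ≤ CTM r for all base blocks r, s, and if the support of n_Y is nonempty, then there exists a pairing P : R → R mapping supp n_X into supp n_Y whose strong conditional value ∑_{r ∈ supp n_X} (CCTM(r, P r) + f(n_X r, n_Y (P r))) is at most the coarse conditional BDM(X|Y); consequently the minimum of this sum over all such pairings is at most BDM(X|Y). -/
open Finsupp

/-! The pairing that sends every block of `X` occurring in `Y` to itself and every other block to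
an arbitrary fixed block of `Y` already beats the coarse value termwise: on shared blocks the two
summands agree because `CCTM (r, r) = 0`, and on a block missing from `Y` we use
`CCTM ≤ CTM` together with `f (n, m) ≤ log n`, which holds since `log n ≥ 0` for `n ≥ 1`. -/

lemma bdmF_le_log {n : ℕ} (hn : n ≠ 0) (m : ℕ) : bdmF n m ≤ Real.log n := by
  unfold bdmF
  split_ifs
  · exact Real.log_nonneg (by exact_mod_cast Nat.one_le_iff_ne_zero.mpr hn)
  · exact le_rfl

lemma sum_le_condBDM {R : Type*} [DecidableEq R] (CTM : R → ℝ) (X Y : R →₀ ℕ) (g : R → ℝ)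
    (h_sdiff : ∀ r ∈ X.support \ Y.support, g r ≤ CTM r + Real.log (X r))
    (h_inter : ∀ r ∈ X.support ∩ Y.support, g r ≤ bdmF (X r) (Y r)) :
    ∑ r ∈ X.support, g r ≤ condBDM CTM X Y := by
  rw [← Finset.sum_inter_add_sum_sdiff X.support Y.support, add_comm, condBDM]
  exact add_le_add (Finset.sum_le_sum h_sdiff) (Finset.sum_le_sum h_inter)

/-- Strong conditional BDM never exceeds coarse conditional BDM: if the conditional estimate
`CCTM` vanishes on the diagonal and is dominated by `CTM`, and the support of `Y` is nonempty,
then there is a pairing `P` mapping the support of `X` into the support of `Y` whose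
strong conditional value is at most the coarse conditional `BDM(X|Y)`; consequently the
minimum of this sum over all such pairings is at most `BDM(X|Y)`. -/
theorem strong_le_coarse {R : Type*} [DecidableEq R] (CTM : R → ℝ) (CCTM : R × R → ℝ)
    (hdiag : ∀ r, CCTM (r, r) = 0) (hdom : ∀ r s, CCTM (r, s) ≤ CTM r)
    (X Y : R →₀ ℕ) (hY : Y.support.Nonempty) :
    ∃ P : R → R, (∀ r ∈ X.support, P r ∈ Y.support) ∧
      ∑ r ∈ X.support, (CCTM (r, P r) + bdmF (X r) (Y (P r))) ≤ condBDM CTM X Y := by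
  obtain ⟨y₀, hy₀⟩ := hY
  refine ⟨fun r => if r ∈ Y.support then r else y₀, fun r _ => ?_, sum_le_condBDM CTM X Y _ ?_ ?_⟩
  · dsimp only
    split_ifs with hr
    exacts [hr, hy₀]
  · intro r hr
    obtain ⟨hrX, hrY⟩ := Finset.mem_sdiff.mp hr
    simp only [if_neg hrY]
    exact add_le_add (hdom r y₀) (bdmF_le_log (Finsupp.mem_support_iff.mp hrX) _)
  · intro r hr
    simp only [if_pos (Finset.mem_inter.mp hr).2, hdiag, zero_add, le_refl]
end
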